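/- arXiv:1306.2385 — 2 statements merged into one kernel-verified Lean document; each statement's English description precedes it below -/
import Mathlib

section
/- Every finitely generated subgroup of GL_n(K), for K a field of characteristic zero, is virtually torsion-free, i.e., has a finite-index subgroup with no nontrivial elements of finite order. -/
/-!
A finitely generated subgroup of `GL_n(K)` already lives in `GL_n(A)` for a finitely generated
`ℤ`-subalgebra `A ⊆ K`. Such a ring is a Jacobson domain of characteristic zero whose residue
fields at maximal ideals are finite. Pick a maximal ideal `m₁`, a prime `p ∈ m₁`, and a maximal
ideal `m₂ ∌ p`; the kernel `Γ` of reduction modulo `m₁` and `m₂` has finite index.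

If `g ≡ 1` modulo a prime `P` and `g ^ q = 1` with `q ∉ P`, then `(∑_{i<q} gⁱ)(g - 1) = 0`, where
the first factor has determinant `≡ qⁿ ≢ 0` mod `P`, so `g = 1`. A nontrivial torsion element of
`Γ` has a power of some prime order `q`, which therefore lies in both `m₁` and `m₂`; but two
distinct primes generate the unit ideal, so `q = p ∉ m₂`.
-/

open Matrix

namespace Subgroup

variable {G G' : Type*} [Group G] [Group G']

instance finiteIndex_comap (f : G →* G') (H : Subgroup G') [H.FiniteIndex] :
    (H.comap f).FiniteIndex :=
  ⟨by rw [index_comap]; exact FiniteIndex.index_ne_zero⟩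

end Subgroup

theorem IsOfFinOrder.exists_orderOf_pow_prime {G : Type*} [Monoid G] {g : G} (hg : IsOfFinOrder g)
    (hg1 : g ≠ 1) : ∃ k q : ℕ, q.Prime ∧ orderOf (g ^ k) = q :=
  ⟨_, _, Nat.minFac_prime (mt orderOf_eq_one_iff.mp hg1),
    orderOf_pow_orderOf_div hg.orderOf_pos.ne' (Nat.minFac_dvd _)⟩

theorem isJacobsonRing_of_isPrincipalIdealRing {R : Type*} [CommRing R] [IsDomain R]
    [IsPrincipalIdealRing R] (h : (⊥ : Ideal R).jacobson = ⊥) : IsJacobsonRing R := by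
  rw [isJacobsonRing_iff_prime_eq]
  intro P hP
  rcases eq_or_ne P ⊥ with rfl | hP0
  · exact h
  · have := IsPrime.to_maximal_ideal hP0
    exact Ideal.jacobson_eq_self_of_isMaximal

instance Int.isJacobsonRing : IsJacobsonRing ℤ := by
  refine isJacobsonRing_of_isPrincipalIdealRing (eq_bot_iff.mpr fun x hx => ?_)
  -- `x * x + 1 = ±1` forces `x = 0`.
  rcases Int.isUnit_iff.mp (Ideal.mem_jacobson_bot.mp hx x) with h | h <;>
    simp <;> nlinarith

theorem finite_of_moduleFinite_int (S : Type*) [Field S] [Module.Finite ℤ S] : Finite S := by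
  obtain ⟨p, hp⟩ := CharP.exists S
  rcases eq_or_ne p 0 with rfl | hp0
  · have := CharP.charP_to_charZero S
    exact (Int.not_isField (isField_of_isIntegral_of_isField Int.cast_injective
      (Field.toIsField S))).elim
  · refine Module.finite_of_fg_torsion S fun x => ⟨⟨p, mem_nonZeroDivisors_of_ne_zero ?_⟩, ?_⟩
    · exact_mod_cast hp0
    · simp [Submonoid.smul_def, CharP.cast_eq_zero]

namespace Ideal

variable {R : Type*} [CommRing R]

theorem finite_quotient_of_finiteType_int [Algebra.FiniteType ℤ R] (m : Ideal R) [m.IsMaximal] :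
    Finite (R ⧸ m) := by
  let := Quotient.field m
  have : Algebra.FiniteType ℤ (R ⧸ m) := .of_surjective (Quotient.mkₐ ℤ m) Quotient.mk_surjective
  have := finite_of_finite_type_of_isJacobsonRing ℤ (R ⧸ m)
  exact finite_of_moduleFinite_int _

theorem exists_prime_natCast_mem (m : Ideal R) [m.IsMaximal] [Finite (R ⧸ m)] :
    ∃ p : ℕ, p.Prime ∧ (p : R) ∈ m := by
  let := Quotient.field m
  refine ⟨ringChar (R ⧸ m), CharP.char_is_prime (R ⧸ m) _, ?_⟩
  rw [← Quotient.eq_zero_iff_mem, map_natCast]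
  exact ringChar.Nat.cast_ringChar

theorem exists_isMaximal_notMem [IsJacobsonRing R] [IsReduced R] {x : R} (hx : x ≠ 0) :
    ∃ m : Ideal R, m.IsMaximal ∧ x ∉ m := by
  by_contra! h
  have hjac : x ∈ (⊥ : Ideal R).jacobson := Submodule.mem_sInf.mpr fun m hm => h m hm.2
  rw [← radical_eq_jacobson, radical_bot_of_isReduced, mem_bot] at hjac
  exact hx hjac

theorem eq_of_natCast_mem_of_prime {m : Ideal R} (hm : m ≠ ⊤) {p q : ℕ} (hp : p.Prime)
    (hq : q.Prime) (hpm : (p : R) ∈ m) (hqm : (q : R) ∈ m) : p = q := by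
  by_contra hne
  obtain ⟨u, v, huv⟩ := ((Nat.coprime_primes hp hq).mpr hne).cast (R := R)
  exact hm ((eq_top_iff_one _).mpr (huv ▸ add_mem (m.mul_mem_left u hpm) (m.mul_mem_left v hqm)))

theorem exists_isMaximal_pair_without_common_prime [IsDomain R] [CharZero R]
    [Algebra.FiniteType ℤ R] : ∃ m₁ m₂ : Ideal R, m₁.IsMaximal ∧ m₂.IsMaximal ∧
      ∀ q : ℕ, q.Prime → (q : R) ∈ m₁ → (q : R) ∉ m₂ := by
  have : IsJacobsonRing R := isJacobsonRing_of_finiteType (A := ℤ)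
  obtain ⟨m₁, hm₁⟩ := exists_maximal R
  have := m₁.finite_quotient_of_finiteType_int
  obtain ⟨p, hp, hpm₁⟩ := m₁.exists_prime_natCast_mem
  obtain ⟨m₂, hm₂, hpm₂⟩ := exists_isMaximal_notMem (Nat.cast_ne_zero.mpr hp.ne_zero : (p : R) ≠ 0)
  refine ⟨m₁, m₂, hm₁, hm₂, fun q hq hqm₁ hqm₂ => hpm₂ ?_⟩
  rwa [eq_of_natCast_mem_of_prime hm₁.ne_top hp hq hpm₁ hqm₁]

end Ideal

namespace Matrix

variable {ι : Type*} [Fintype ι] [DecidableEq ι]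

theorem eq_one_of_pow_eq_one_of_map_eq_one {R : Type*} [CommRing R] [IsDomain R]
    {P : Ideal R} [P.IsPrime] {g : Matrix ι ι R} {q : ℕ} (hq : (q : R) ∉ P)
    (hg : g.map (Ideal.Quotient.mk P) = 1) (hgq : g ^ q = 1) : g = 1 := by
  set M := ∑ i ∈ Finset.range q, g ^ i
  have hM : M * (g - 1) = 0 := by rw [geom_sum_mul, hgq, sub_self]
  have hM_mod : (Ideal.Quotient.mk P).mapMatrix M = (q : R ⧸ P) • 1 := by
    simp [M, map_sum, map_pow, hg, Nat.cast_smul_eq_nsmul]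
  have hdet : M.det ∉ P := by
    rw [← Ideal.Quotient.eq_zero_iff_mem, RingHom.map_det, hM_mod, det_smul, det_one, mul_one]
    refine pow_ne_zero _ ?_
    rwa [Ne, ← map_natCast (Ideal.Quotient.mk P), Ideal.Quotient.eq_zero_iff_mem]
  have : M.det • (g - 1) = 0 := by
    rw [← one_mul (g - 1), ← smul_mul_assoc, ← adjugate_mul, mul_assoc, hM, mul_zero]
  exact sub_eq_zero.mp ((smul_eq_zero.mp this).resolve_left fun h => hdet (h ▸ P.zero_mem))

namespace GeneralLinearGroup

theorem map_injective {R S : Type*} [CommRing R] [CommRing S] {f : R →+* S}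
    (hf : Function.Injective f) : Function.Injective (map (n := ι) f) :=
  fun _ _ h => Units.ext (Matrix.map_injective hf (congrArg Units.val h))

theorem mem_range_map_val {R K : Type*} [CommRing R] [CommRing K] [Algebra R K]
    (A : Subalgebra R K) {g : GL ι K} (hg : ∀ i j, g i j ∈ A) (hg' : ∀ i j, g⁻¹ i j ∈ A) :
    g ∈ (map (n := ι) (A.val : A →+* K)).range := by
  let f : Matrix ι ι A →+* Matrix ι ι K := (A.val : A →+* K).mapMatrix
  have hf : Function.Injective f := Matrix.map_injective Subtype.val_injective
  let M : Matrix ι ι A := Matrix.of fun i j => ⟨g i j, hg i j⟩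
  let N : Matrix ι ι A := Matrix.of fun i j => ⟨g⁻¹ i j, hg' i j⟩
  have hM : f M = g := rfl
  have hN : f N = (g⁻¹ : GL ι K) := rfl
  refine ⟨⟨M, N, hf ?_, hf ?_⟩, Units.ext hM⟩
  · rw [map_mul, map_one, hM, hN, ← Units.val_mul, mul_inv_cancel, Units.val_one]
  · rw [map_mul, map_one, hM, hN, ← Units.val_mul, inv_mul_cancel, Units.val_one]

theorem natCast_orderOf_mem_of_mem_ker_map {R : Type*} [CommRing R] [IsDomain R] {P : Ideal R}
    [P.IsPrime] {g : GL ι R} (hg : g ∈ (map (n := ι) (Ideal.Quotient.mk P)).ker) (hg1 : g ≠ 1) :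
    (orderOf g : R) ∈ P := by
  by_contra hP
  refine hg1 (Units.ext (eq_one_of_pow_eq_one_of_map_eq_one hP (congrArg Units.val hg) ?_))
  rw [← Units.val_pow_eq_pow_val, pow_orderOf_eq_one, Units.val_one]

theorem exists_finiteIndex_forall_isOfFinOrder_eq_one (R : Type*) [CommRing R] [IsDomain R]
    [CharZero R] [Algebra.FiniteType ℤ R] :
    ∃ Γ : Subgroup (GL ι R), Γ.FiniteIndex ∧ ∀ g ∈ Γ, IsOfFinOrder g → g = 1 := by
  obtain ⟨m₁, m₂, hm₁, hm₂, hm₁₂⟩ := Ideal.exists_isMaximal_pair_without_common_prime (R := R)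
  have := m₁.finite_quotient_of_finiteType_int
  have := m₂.finite_quotient_of_finiteType_int
  refine ⟨(map (n := ι) (Ideal.Quotient.mk m₁)).ker ⊓ (map (n := ι) (Ideal.Quotient.mk m₂)).ker,
    inferInstance, fun g hgΓ hg => of_not_not fun hg1 => ?_⟩
  obtain ⟨k, q, hq, hgkq⟩ := hg.exists_orderOf_pow_prime hg1
  have hgk1 : g ^ k ≠ 1 := fun h => hq.ne_one (by rw [← hgkq, h, orderOf_one])
  have hgkΓ := Subgroup.pow_mem _ hgΓ k
  exact hm₁₂ q hq (hgkq ▸ natCast_orderOf_mem_of_mem_ker_map hgkΓ.1 hgk1)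
    (hgkq ▸ natCast_orderOf_mem_of_mem_ker_map hgkΓ.2 hgk1)

end GeneralLinearGroup

end Matrix

theorem Subgroup.exists_injective_GL_of_fg {ι K : Type*} [Fintype ι] [DecidableEq ι]
    [CommRing K] (G : Subgroup (GL ι K)) (hG : Group.FG G) :
    ∃ A : Subalgebra ℤ K, Algebra.FiniteType ℤ A ∧
      ∃ ψ : G →* GL ι A, Function.Injective ψ := by
  classical
  obtain ⟨S, hS⟩ := (Group.fg_iff_subgroup_fg G).mp hG
  let entries (g : GL ι K) : Finset K := Finset.univ.image fun p : ι × ι => g p.1 p.2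
  let A := Algebra.adjoin ℤ (S.biUnion (fun g => entries g ∪ entries g⁻¹) : Set K)
  have hentries {g : GL ι K} (hg : g ∈ S) {x : K} (hx : x ∈ entries g ∪ entries g⁻¹) : x ∈ A :=
    Algebra.subset_adjoin (Finset.mem_biUnion.mpr ⟨g, hg, hx⟩)
  let φ := GeneralLinearGroup.map (n := ι) (A.val : A →+* K)
  have hGφ : G ≤ φ.range := by
    rw [← hS, Subgroup.closure_le]
    intro g hg
    refine GeneralLinearGroup.mem_range_map_val A (fun i j => hentries hg ?_)
      (fun i j => hentries hg ?_)
    · exact Finset.mem_union_left _ (Finset.mem_image_of_mem _ (Finset.mem_univ (i, j)))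
    · exact Finset.mem_union_right _ (Finset.mem_image_of_mem _ (Finset.mem_univ (i, j)))
  have hφ : Function.Injective φ := GeneralLinearGroup.map_injective Subtype.val_injective
  exact ⟨A, (Subalgebra.fg_iff_finiteType A).mp (Subalgebra.fg_adjoin_finset _),
    (MonoidHom.ofInjective hφ).symm.toMonoidHom.comp (Subgroup.inclusion hGφ),
    (MonoidHom.ofInjective hφ).symm.injective.comp (Subgroup.inclusion_injective hGφ)⟩

/-- Selberg's lemma: every finitely generated subgroup of `GL n K`, for `K` a field of
characteristic zero, is virtually torsion-free. -/
theorem selberg_virtually_torsion_free (n : ℕ) (K : Type*) [Field K] [CharZero K]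
    (G : Subgroup (GL (Fin n) K)) (hfg : Group.FG G) :
    ∃ H : Subgroup G, H.FiniteIndex ∧ ∀ h : H, IsOfFinOrder h → h = 1 := by
  obtain ⟨A, hA, ψ, hψ⟩ := G.exists_injective_GL_of_fg hfg
  obtain ⟨Γ, hΓ, hΓ_tors⟩ :=
    GeneralLinearGroup.exists_finiteIndex_forall_isOfFinOrder_eq_one (ι := Fin n) A
  refine ⟨Γ.comap ψ, inferInstance, fun h hh => Subtype.ext (hψ ?_)⟩
  rw [Subgroup.coe_one, map_one]
  exact hΓ_tors _ h.2 (ψ.isOfFinOrder ((Γ.comap ψ).subtype.isOfFinOrder hh))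
end

section
/- In a finitely generated commutative integral domain, the intersection of all maximal ideals is zero (the Jacobson radical is trivial). -/
/-!
In a one-dimensional domain the only prime that need not be maximal is `⊥`, so such a domain is
a Jacobson ring as soon as its Jacobson radical vanishes; this applies to `ℤ`. By the general
Nullstellensatz every finitely generated `ℤ`-algebra is then Jacobson, and in a reduced Jacobson
ring the Jacobson radical equals the nilradical, which is zero.
-/

open Ideal

theorem isJacobsonRing_of_jacobson_bot_eq_bot {R : Type*} [CommRing R] [IsDomain R]
    [Ring.DimensionLEOne R] (h : (⊥ : Ideal R).jacobson = ⊥) : IsJacobsonRing R := by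
  refine isJacobsonRing_iff_prime_eq.2 fun P hP ↦ ?_
  rcases eq_or_ne P ⊥ with rfl | hP₀
  · exact h
  · have := Ring.DimensionLEOne.maximalOfPrime hP₀ hP
    exact jacobson_eq_self_of_isMaximal

theorem Int.jacobson_bot_eq_bot : (⊥ : Ideal ℤ).jacobson = ⊥ := by
  refine eq_bot_iff.2 fun x hx ↦ ?_
  have hunit : IsUnit (x * x + 1) := mem_jacobson_bot.1 hx x
  rw [Int.isUnit_iff] at hunit
  rw [mem_bot]
  rcases hunit with h | h <;> nlinarith

instance : IsJacobsonRing ℤ := isJacobsonRing_of_jacobson_bot_eq_bot Int.jacobson_bot_eq_bot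

theorem iInf_isMaximal_eq_bot_of_isJacobsonRing {R : Type*} [CommRing R] [IsJacobsonRing R]
    [IsReduced R] : (⨅ (I : Ideal R) (_ : I.IsMaximal), I) = ⊥ :=
  calc (⨅ (I : Ideal R) (_ : I.IsMaximal), I) = Ring.jacobson R :=
        (Ring.jacobson_eq_sInf_isMaximal R ▸ sInf_eq_iInf).symm
    _ = (⊥ : Ideal R).radical := by rw [← jacobson_bot, radical_eq_jacobson]
    _ = ⊥ := radical_bot_of_isReduced

/-- In a finitely generated (as a `ℤ`-algebra) commutative integral domain, the
intersection of all maximal ideals is zero. -/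
theorem jacobson_radical_eq_bot_of_fg_domain {A : Type*} [CommRing A] [IsDomain A]
    (hfg : (⊤ : Subalgebra ℤ A).FG) :
    (⨅ (I : Ideal A) (_ : I.IsMaximal), I) = ⊥ :=
  have : Algebra.FiniteType ℤ A := ⟨hfg⟩
  have : IsJacobsonRing A := isJacobsonRing_of_finiteType (A := ℤ)
  iInf_isMaximal_eq_bot_of_isJacobsonRing
end
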